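/- Let ρ ≥ 1, L ≥ μ ≥ 0 with L > 0, and L₂ ≥ 0 be reals. Define the feasible set S := {(α,β) : α ≥ 0, β ≥ 0, α² + ρ²β² ≤ 1 + ((β−α)₊)²}, and for each α define T(α) := {(t₁,t₂) : t₁ ≥ t₂ ≥ 0, (1−α²)t₁² + α²t₂² = 1}. Then the infimum over (α,β) ∈ S of the supremum over (t₁,t₂) ∈ T(α) of ((L+μ)/2)·[(1−α²)t₁ + α²t₂] − (L−μ)/2 − t₂·L₂·α·β equals (1/2)·(√((L+μ)² + ρ⁻²·L₂²) − ρ⁻¹·L₂ − (L−μ)); moreover this infimum is attained, and for every (α,β) ∈ S the inner supremum is attained. -/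

import Mathlib

noncomputable section

open Matrix

attribute [local instance] Matrix.normedAddCommGroup Matrix.normedSpace

/-- Euclidean norm on `ℝⁿ`. -/
def enorm {n : ℕ} (x : Fin n → ℝ) : ℝ := Real.sqrt (∑ i, x i ^ 2)

/-- Frobenius norm of a real matrix. -/
def frob {m n : ℕ} (A : Matrix (Fin m) (Fin n) ℝ) : ℝ := Real.sqrt (∑ i, ∑ j, A i j ^ 2)

/-- Trace inner product `⟨A,B⟩ = tr(AᵀB)`. -/
def tip {m n : ℕ} (A B : Matrix (Fin m) (Fin n) ℝ) : ℝ := ∑ i, ∑ j, A i j * B i j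

/-- Spectral (operator) norm: largest singular value. -/
def opNorm {m n : ℕ} (A : Matrix (Fin m) (Fin n) ℝ) : ℝ :=
  sSup {t | ∃ x : Fin n → ℝ, _root_.enorm x ≤ 1 ∧ t = _root_.enorm (A.mulVec x)}

/-- Nuclear norm: `tr √(AᴴA)`, the sum of the singular values. -/
def nucNorm {m n : ℕ} (A : Matrix (Fin m) (Fin n) ℝ) : ℝ :=
  (((Matrix.posSemidef_conjTranspose_mul_self A).1.eigenvectorUnitary : Matrix (Fin n) (Fin n) ℝ) *
    Matrix.diagonal ((RCLike.ofReal : ℝ → ℝ) ∘ Real.sqrt ∘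
      (Matrix.posSemidef_conjTranspose_mul_self A).1.eigenvalues) *
    (star (Matrix.posSemidef_conjTranspose_mul_self A).1.eigenvectorUnitary :
      Matrix (Fin n) (Fin n) ℝ)).trace

/-- The `j`-th largest singular value of a real matrix (`1`-indexed):
the list of square roots of eigenvalues of `AᴴA`, sorted in decreasing order. -/
def singVal {m n : ℕ} (A : Matrix (Fin m) (Fin n) ℝ) (j : ℕ) : ℝ :=
  (((List.ofFn ((show (Aᵀ * A).IsHermitian by
      rw [Matrix.IsHermitian, Matrix.conjTranspose_eq_transpose_of_trivial, Matrix.transpose_mul,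
        Matrix.transpose_transpose]).eigenvalues)).map
      Real.sqrt).insertionSort (· ≥ ·)).getD (j - 1) 0

/-- A second-order critical point of `f`: zero gradient and positive-semidefinite
Hessian quadratic form. -/
def IsSecondOrderCriticalPoint {E : Type*} [NormedAddCommGroup E] [NormedSpace ℝ E]
    (f : E → ℝ) (x : E) : Prop :=
  fderiv ℝ f x = 0 ∧ ∀ v : E, 0 ≤ fderiv ℝ (fun y => fderiv ℝ f y v) x v

/-- The gradient of `φ` at `M`, w.r.t. the trace inner product. -/
def gradM {m n : ℕ} (φ : Matrix (Fin m) (Fin n) ℝ → ℝ) (M : Matrix (Fin m) (Fin n) ℝ) :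
    Matrix (Fin m) (Fin n) ℝ :=
  Matrix.of fun i j => fderiv ℝ φ M (Matrix.single i j 1)

/-- Hessian quadratic form `∇²φ(M)[E,E]`. -/
def hess {m n : ℕ} (φ : Matrix (Fin m) (Fin n) ℝ → ℝ) (M E : Matrix (Fin m) (Fin n) ℝ) : ℝ :=
  fderiv ℝ (fun N => fderiv ℝ φ N E) M E

/-- Adjoint of a linear measurement map, w.r.t. the trace inner product. -/
def adj {m n p : ℕ} (A : Matrix (Fin m) (Fin n) ℝ →ₗ[ℝ] (Fin p → ℝ)) (ξ : Fin p → ℝ) :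
    Matrix (Fin m) (Fin n) ℝ :=
  Matrix.of fun i j => ∑ k, ξ k * A (Matrix.single i j 1) k

/-- The subspace `S_d` of `d × d` real symmetric matrices. -/
def SymSpace (d : ℕ) : Submodule ℝ (Matrix (Fin d) (Fin d) ℝ) where
  carrier := {A | Aᵀ = A}
  add_mem' := by intro a b ha hb; simp only [Set.mem_setOf_eq, Matrix.transpose_add] at *
                 rw [ha, hb]
  zero_mem' := by simp
  smul_mem' := by intro c A hA; simp only [Set.mem_setOf_eq, Matrix.transpose_smul] at *
                  rw [hA]

lemma mem_symSpace {d : ℕ} {A : Matrix (Fin d) (Fin d) ℝ} : A ∈ SymSpace d ↔ Aᵀ = A := Iff.rfl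

lemma stdBasis_symm {d : ℕ} (i j : Fin d) :
    Matrix.single i j (1:ℝ) + Matrix.single j i 1 ∈ SymSpace d := by
  rw [mem_symSpace, Matrix.transpose_add]
  ext a b
  simp only [Matrix.add_apply, Matrix.transpose_apply, Matrix.single, Matrix.of_apply]
  rw [add_comm]
  congr 1 <;> · congr 1; rw [eq_iff_iff, and_comm]

/-- The symmetrized elementary matrix `E_ij + E_ji` as an element of `S_d`. -/
def symBasis {d : ℕ} (i j : Fin d) : SymSpace d :=
  ⟨Matrix.single i j 1 + Matrix.single j i 1, stdBasis_symm i j⟩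

lemma mmT_mem {d r : ℕ} (U : Matrix (Fin d) (Fin r) ℝ) : U * Uᵀ ∈ SymSpace d := by
  rw [mem_symSpace, Matrix.transpose_mul, Matrix.transpose_transpose]

/-- `U ↦ UUᵀ` as an element of `S_d`. -/
def mmT {d r : ℕ} (U : Matrix (Fin d) (Fin r) ℝ) : SymSpace d := ⟨U * Uᵀ, mmT_mem U⟩

/-- The gradient of `φ : S_d → ℝ` at `M`, as the symmetric matrix representing the
derivative w.r.t. the trace inner product on `S_d`. -/
def gradS {d : ℕ} (φ : SymSpace d → ℝ) (M : SymSpace d) : Matrix (Fin d) (Fin d) ℝ :=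
  Matrix.of fun i j => (1/2) * fderiv ℝ φ M (symBasis i j)

/-- Hessian quadratic form of `φ : S_d → ℝ`. -/
def hessS {d : ℕ} (φ : SymSpace d → ℝ) (M E : SymSpace d) : ℝ :=
  fderiv ℝ (fun N => fderiv ℝ φ N E) M E

/-- Adjoint of a linear map `𝒜 : S_d → ℝⁿ` w.r.t. the trace inner product on `S_d`. -/
def adjS {d p : ℕ} (A : SymSpace d →ₗ[ℝ] (Fin p → ℝ)) (ξ : Fin p → ℝ) :
    Matrix (Fin d) (Fin d) ℝ :=
  Matrix.of fun i j => (1/2) * ∑ k, ξ k * A (symBasis i j) k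

/-- `P` is the orthogonal projection matrix onto the column space of `U`:
it is symmetric, idempotent, and has the same range as `U`. -/
def IsOrthProjCol {d r : ℕ} (P : Matrix (Fin d) (Fin d) ℝ) (U : Matrix (Fin d) (Fin r) ℝ) :
    Prop :=
  Pᵀ = P ∧ P * P = P ∧ P * U = U ∧ ∃ W : Matrix (Fin r) (Fin d) ℝ, P = U * W

/-!
Write `P = (L + μ)/2`, `C = (L - μ)/2`, `K = Pα - L₂β`. The inner objective is
`P (1 - α²) t₁ + α K t₂ - C`, so Cauchy–Schwarz on the ellipse `(1 - α²) t₁² + α² t₂² = 1` gives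
the inner maximum `√(P² (1 - α²) + K₊²) - C`. With `q = L₂/ρ` and `b = ρβ`, the outer problem
minimizes `P² (1 - α²) + (Pα - qb)₊²`. Its value is `F²`, where `F (F + q) = P²`: this is the
least eigenvalue of the quadratic form `P² b² + (Pα - qb)²`, attained on the circle `α² + b² = 1`
in the direction `(P, F)`. The lower bound amounts to `2 P α b ≤ F + q b²` on `S`, which is
AM–GM when `β ≤ α` and follows from `2 P ρ ≤ (F + q) ρ² + F` when `β > α`; when `Pα < qb` it
is applied at the smaller `b = Pα/q`, using that `S` is closed downwards in `β`.
-/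

open Real Set

def Feasible (ρ α β : ℝ) : Prop :=
  α^2 + ρ^2*β^2 ≤ 1 + (max (β - α) 0)^2

/-- The inner objective over `T(α)`, where `P = (L + μ)/2` and `C = (L - μ)/2`. -/
def innerValues (P C L₂ α β : ℝ) : Set ℝ :=
  {v | ∃ t₁ t₂ : ℝ, t₂ ≤ t₁ ∧ 0 ≤ t₂ ∧ (1 - α^2)*t₁^2 + α^2*t₂^2 = 1 ∧
    v = P * ((1 - α^2)*t₁ + α^2*t₂) - C - t₂*L₂*α*β}

lemma mul_add_mul_le_sqrt_mul_sqrt {A : ℝ} (hA : 0 ≤ A) (P K α t₁ t₂ : ℝ) :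
    P*A*t₁ + α*K*t₂ ≤ √(P^2*A + K^2) * √(A*t₁^2 + α^2*t₂^2) := by
  rw [← sqrt_mul (by positivity)]
  apply le_sqrt_of_sq_le
  nlinarith [mul_nonneg hA (sq_nonneg (P*α*t₂ - K*t₁))]

section Inner

variable {P C L₂ α β : ℝ}

lemma isGreatest_innerValues (hP : 0 ≤ P) (hα₀ : 0 ≤ α) (hα₁ : α ≤ 1) (hL₂β : 0 ≤ L₂*β)
    (hdeg : α < 1 ∨ L₂*β ≤ P*α) :
    IsGreatest (innerValues P C L₂ α β) (√(P^2*(1-α^2) + (max (P*α - L₂*β) 0)^2) - C) := by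
  set A := 1 - α^2 with hA_def
  set K := P*α - L₂*β with hK_def
  have hA : 0 ≤ A := by nlinarith
  have hobj (t₁ t₂ : ℝ) : P*(A*t₁ + α^2*t₂) - C - t₂*L₂*α*β = P*A*t₁ + α*K*t₂ - C := by ring
  refine ⟨?_, ?_⟩
  · rcases hα₁.lt_or_eq with hα₁ | rfl
    · have hA : 0 < A := by nlinarith
      rcases le_or_gt K 0 with hK | hK
      · -- the `t₂`-term does not pay off: `t = (1/√A, 0)`
        have hs : 0 < √A := sqrt_pos.2 hA
        have hs2 : √A^2 = A := sq_sqrt hA.le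
        refine ⟨1/√A, 0, by positivity, le_rfl, ?_, ?_⟩
        · field_simp; linarith
        · rw [hobj, max_eq_right hK, show P^2*A + 0^2 = (P*√A)^2 by rw [mul_pow, hs2]; ring,
            sqrt_sq (by positivity)]
          field_simp
          linear_combination P*hs2
      · -- equality case of Cauchy–Schwarz: `(√A t₁, α t₂) ∥ (P √A, K)`
        have hα : 0 < α := by
          by_contra! h
          have : α = 0 := le_antisymm h hα₀
          simp only [hK_def, this, mul_zero, zero_sub] at hK
          linarith
        set l := √(P^2*A + K^2)
        have hl : 0 < l := sqrt_pos.2 (by positivity)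
        have hl2 : l^2 = P^2*A + K^2 := sq_sqrt (by positivity)
        refine ⟨P/l, K/(α*l), ?_, by positivity, ?_, ?_⟩
        · rw [div_le_div_iff₀ (by positivity) hl]
          nlinarith
        · field_simp
          linarith
        · rw [hobj, max_eq_left hK.le]
          field_simp
          linarith
    · have hK : 0 ≤ K := by
        rcases hdeg with h | h
        · exact absurd h (lt_irrefl 1)
        · linarith
      refine ⟨1, 1, le_rfl, zero_le_one, by ring, ?_⟩
      rw [hobj, max_eq_left hK, hA_def, show P^2*(1 - 1^2) + K^2 = K^2 by ring, sqrt_sq hK]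
      ring
  · rintro v ⟨t₁, t₂, -, ht₂, hcon, rfl⟩
    have hKt : α*K*t₂ ≤ α*(max K 0)*t₂ := by
      gcongr
      exact le_max_left K 0
    have hcs := mul_add_mul_le_sqrt_mul_sqrt hA P (max K 0) α t₁ t₂
    rw [hcon, sqrt_one, mul_one] at hcs
    rw [hobj]
    linarith

end Inner

namespace Feasible

variable {ρ α β : ℝ}

lemma lt_one_or_eq_one_and_eq_zero (h : Feasible ρ α β) (hρ : 1 ≤ ρ) : α < 1 ∨ α = 1 ∧ β = 0 := by
  unfold Feasible at h
  have hρβ : β^2 ≤ ρ^2*β^2 := le_mul_of_one_le_left (sq_nonneg β) (one_le_pow₀ hρ)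
  rcases le_or_gt β α with hβα | hαβ
  · rw [max_eq_right (by linarith)] at h
    have hα : α ≤ 1 := by nlinarith
    refine hα.lt_or_eq.imp_right fun hα ↦ ⟨hα, ?_⟩
    subst hα
    nlinarith
  · rw [max_eq_left (sub_nonneg.2 hαβ.le)] at h
    left
    nlinarith

lemma of_le (h : Feasible ρ α β) (hρ : 1 ≤ ρ) (hα : 0 ≤ α) {β' : ℝ} (hβ' : 0 ≤ β')
    (hβ'β : β' ≤ β) : Feasible ρ α β' := by
  unfold Feasible at *
  have hρ2 : 0 ≤ ρ^2 - 1 := by nlinarith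
  have hsq : β'^2 ≤ β^2 := pow_le_pow_left₀ hβ' hβ'β 2
  rcases le_or_gt β α with hβα | hαβ
  · rw [max_eq_right (by linarith)] at h ⊢
    nlinarith
  · rw [max_eq_left (sub_nonneg.2 hαβ.le)] at h
    rcases le_or_gt β' α with hβ'α | hαβ'
    · -- the constraint at `β` implies the one at `β = α`, i.e. `α² + ρ²α² ≤ 1`
      rw [max_eq_right (by linarith)]
      nlinarith [mul_nonneg hρ2 (sub_nonneg.2 (pow_le_pow_left₀ hα hαβ.le 2)),
        mul_nonneg (sub_nonneg.2 hαβ.le) hα, pow_le_pow_left₀ hβ' hβ'α 2]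
    · rw [max_eq_left (sub_nonneg.2 hαβ'.le)]
      nlinarith [mul_nonneg hρ2 (sub_nonneg.2 hsq), mul_nonneg hα (sub_nonneg.2 hβ'β)]

end Feasible

section LowerBound

variable {ρ α β P q F : ℝ}

lemma two_mul_le_of_sq_eq (hρ : 0 ≤ ρ) (hP : 0 ≤ P) (hF : 0 ≤ F) (hq : 0 ≤ q)
    (hPF : P^2 = F*(F+q)) : 2*P*ρ ≤ (F+q)*ρ^2 + F := by
  have hsq : (2*P*ρ)^2 ≤ ((F+q)*ρ^2 + F)^2 := by
    nlinarith [sq_nonneg ((F+q)*ρ^2 - F)]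
  exact pow_le_pow_iff_left₀ (by positivity) (by positivity) two_ne_zero |>.1 hsq

lemma Feasible.two_mul_le (h : Feasible ρ α β) (hρ : 1 ≤ ρ) (hβ : 0 ≤ β)
    (hP : 0 ≤ P) (hq : 0 ≤ q) (hF : 0 < F) (hPF : P^2 = F*(F+q)) :
    2*P*α*(ρ*β) ≤ F + q*(ρ*β)^2 := by
  unfold Feasible at h
  rcases le_or_gt β α with hβα | hαβ
  · rw [max_eq_right (by linarith)] at h
    -- AM–GM: `2 P α b ≤ F α² + (F + q) b²`, whose discriminant `P² - F (F + q)` vanishes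
    refine le_of_mul_le_mul_left ?_ hF
    nlinarith [sq_nonneg (F*α - P*(ρ*β)), mul_le_mul_of_nonneg_left h hF.le]
  · rw [max_eq_left (sub_nonneg.2 hαβ.le)] at h
    have hFP : F ≤ P*ρ := by nlinarith [le_mul_of_one_le_right hP hρ]
    calc 2*P*α*(ρ*β) = 2*F*α*β + 2*(P*ρ - F)*α*β := by ring
      _ ≤ 2*F*α*β + 2*(P*ρ - F)*β^2 := by
        nlinarith [mul_le_mul_of_nonneg_left hαβ.le (mul_nonneg (sub_nonneg.2 hFP) hβ)]
      _ ≤ 2*F*α*β + ((F+q)*ρ^2 - F)*β^2 := by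
        gcongr
        linarith [two_mul_le_of_sq_eq (zero_le_one.trans hρ) hP hF.le hq hPF]
      _ = F*(2*α*β + (ρ^2 - 1)*β^2) + q*(ρ*β)^2 := by ring
      _ ≤ F + q*(ρ*β)^2 := by gcongr; nlinarith

lemma sq_le_of_forall_two_mul_le (hP : 0 ≤ P) (hα : 0 ≤ α) (hq : 0 ≤ q) (hPF : P^2 = F*(F+q))
    {b : ℝ} (hb : 0 ≤ b) (h : ∀ b' ∈ Icc 0 b, 2*P*α*b' ≤ F + q*b'^2) :
    F^2 ≤ P^2*(1-α^2) + (max (P*α - q*b) 0)^2 := by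
  rcases le_or_gt (q*b) (P*α) with hqb | hqb
  · rw [max_eq_left (sub_nonneg.2 hqb)]
    nlinarith [mul_le_mul_of_nonneg_left (h b ⟨hb, le_rfl⟩) hq]
  · -- use the bound at the minimizer `b' = P α / q` of `F + q b'² - 2 P α b'`
    have hq : 0 < q := pos_of_mul_pos_left (hqb.trans_le' (by positivity)) hb
    have hb' : P*α/q ∈ Icc 0 b := ⟨by positivity, (div_le_iff₀' hq).2 hqb.le⟩
    have hqb' : q*(P*α/q) = P*α := mul_div_cancel₀ _ hq.ne'
    rw [max_eq_right (by linarith)]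
    nlinarith [mul_le_mul_of_nonneg_left (h _ hb') hq.le]

lemma Feasible.sq_le (h : Feasible ρ α β) (hρ : 1 ≤ ρ) (hα : 0 ≤ α) (hβ : 0 ≤ β)
    (hP : 0 ≤ P) (hq : 0 ≤ q) (hF : 0 < F) (hPF : P^2 = F*(F+q)) :
    F^2 ≤ P^2*(1-α^2) + (max (P*α - q*(ρ*β)) 0)^2 := by
  have hρ₀ : 0 < ρ := zero_lt_one.trans_le hρ
  refine sq_le_of_forall_two_mul_le hP hα hq hPF (by positivity) fun b hb ↦ ?_
  obtain ⟨β', rfl⟩ : ∃ β', b = ρ*β' := ⟨b/ρ, (mul_div_cancel₀ b hρ₀.ne').symm⟩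
  have hβ' : 0 ≤ β' := (mul_nonneg_iff_of_pos_left hρ₀).1 hb.1
  have hβ'β : β' ≤ β := le_of_mul_le_mul_left hb.2 hρ₀
  exact (h.of_le hρ hα hβ' hβ'β).two_mul_le hρ hβ' hP hq hF hPF

lemma exists_feasible_sq_eq (hρ : 0 < ρ) (hP : 0 < P) (hF : 0 ≤ F) (hPF : P^2 = F*(F+q)) :
    ∃ α β, 0 ≤ α ∧ 0 ≤ β ∧ Feasible ρ α β ∧
      P^2*(1-α^2) + (max (P*α - q*(ρ*β)) 0)^2 = F^2 := by
  -- `(α, ρβ)` is the unit eigenvector of `P² b² + (Pα - qb)²` for its least eigenvalue `F²`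
  set σ := √(P^2 + F^2)
  have hσ : 0 < σ := sqrt_pos.2 (by positivity)
  have hσ2 : σ^2 = P^2 + F^2 := sq_sqrt (by positivity)
  refine ⟨P/σ, F/(ρ*σ), by positivity, by positivity, ?_, ?_⟩
  · have hunit : (P/σ)^2 + ρ^2*(F/(ρ*σ))^2 = 1 := by
      field_simp
      linarith
    unfold Feasible
    nlinarith [sq_nonneg (max (F/(ρ*σ) - P/σ) 0)]
  · have hK : P*(P/σ) - q*(ρ*(F/(ρ*σ))) = F^2/σ := by
      field_simp
      linear_combination hPF
    rw [hK, max_eq_left (by positivity)]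
    field_simp
    linear_combination (P^2 - F^2)*hσ2

end LowerBound

section MinMax

variable {ρ P C L₂ α β : ℝ}

lemma Feasible.isGreatest_innerValues (h : Feasible ρ α β) (hρ : 1 ≤ ρ) (hP : 0 ≤ P)
    (hα : 0 ≤ α) (hβ : 0 ≤ β) (hL₂ : 0 ≤ L₂) :
    IsGreatest (innerValues P C L₂ α β) (√(P^2*(1-α^2) + (max (P*α - L₂*β) 0)^2) - C) := by
  have hL₂β : 0 ≤ L₂*β := mul_nonneg hL₂ hβ
  rcases h.lt_one_or_eq_one_and_eq_zero hρ with hα₁ | ⟨rfl, rfl⟩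
  · exact _root_.isGreatest_innerValues hP hα hα₁.le hL₂β (.inl hα₁)
  · exact _root_.isGreatest_innerValues hP hα le_rfl hL₂β (.inr (by simpa using hP))

lemma Feasible.isGreatest_sSup_innerValues (h : Feasible ρ α β) (hρ : 1 ≤ ρ) (hP : 0 ≤ P)
    (hα : 0 ≤ α) (hβ : 0 ≤ β) (hL₂ : 0 ≤ L₂) :
    IsGreatest (innerValues P C L₂ α β) (sSup (innerValues P C L₂ α β)) := by
  have hmax := h.isGreatest_innerValues (C := C) hρ hP hα hβ hL₂
  rwa [hmax.csSup_eq]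

lemma isLeast_sSup_innerValues (hρ : 1 ≤ ρ) (hP : 0 < P) (hL₂ : 0 ≤ L₂) {F : ℝ} (hF : 0 < F)
    (hPF : P^2 = F*(F + L₂/ρ)) :
    IsLeast {w | ∃ α β, 0 ≤ α ∧ 0 ≤ β ∧ Feasible ρ α β ∧ w = sSup (innerValues P C L₂ α β)}
      (F - C) := by
  have hρ₀ : 0 < ρ := zero_lt_one.trans_le hρ
  have hL₂β (β : ℝ) : L₂/ρ*(ρ*β) = L₂*β := by field_simp
  have hsSup (α β : ℝ) (hα : 0 ≤ α) (hβ : 0 ≤ β) (h : Feasible ρ α β) :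
      sSup (innerValues P C L₂ α β) = √(P^2*(1-α^2) + (max (P*α - L₂*β) 0)^2) - C :=
    (h.isGreatest_innerValues hρ hP.le hα hβ hL₂).csSup_eq
  refine ⟨?_, ?_⟩
  · obtain ⟨α, β, hα, hβ, h, hval⟩ := exists_feasible_sq_eq hρ₀ hP hF.le hPF
    refine ⟨α, β, hα, hβ, h, ?_⟩
    rw [hsSup α β hα hβ h, ← hL₂β, hval, sqrt_sq hF.le]
  · rintro w ⟨α, β, hα, hβ, h, rfl⟩
    rw [hsSup α β hα hβ h, ← hL₂β, sub_le_sub_iff_right]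
    exact le_sqrt_of_sq_le (h.sq_le hρ hα hβ hP.le (by positivity) hF hPF)

end MinMax

theorem minmax_value_general
    (ρ L μ L₂ : ℝ) (hρ : 1 ≤ ρ) (hμ0 : 0 ≤ μ) (hL : 0 < L) (hL₂ : 0 ≤ L₂) :
    (∀ α β : ℝ, 0 ≤ α → 0 ≤ β → α^2 + ρ^2 * β^2 ≤ 1 + (max (β - α) 0)^2 →
      IsGreatest {v : ℝ | ∃ t₁ t₂ : ℝ, t₂ ≤ t₁ ∧ 0 ≤ t₂ ∧ (1 - α^2)*t₁^2 + α^2*t₂^2 = 1 ∧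
          v = (L + μ)/2 * ((1 - α^2)*t₁ + α^2*t₂) - (L - μ)/2 - t₂*L₂*α*β}
        (sSup {v : ℝ | ∃ t₁ t₂ : ℝ, t₂ ≤ t₁ ∧ 0 ≤ t₂ ∧ (1 - α^2)*t₁^2 + α^2*t₂^2 = 1 ∧
          v = (L + μ)/2 * ((1 - α^2)*t₁ + α^2*t₂) - (L - μ)/2 - t₂*L₂*α*β})) ∧
    IsLeast {w : ℝ | ∃ α β : ℝ, 0 ≤ α ∧ 0 ≤ β ∧ α^2 + ρ^2*β^2 ≤ 1 + (max (β - α) 0)^2 ∧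
        w = sSup {v : ℝ | ∃ t₁ t₂ : ℝ, t₂ ≤ t₁ ∧ 0 ≤ t₂ ∧ (1 - α^2)*t₁^2 + α^2*t₂^2 = 1 ∧
          v = (L + μ)/2 * ((1 - α^2)*t₁ + α^2*t₂) - (L - μ)/2 - t₂*L₂*α*β}}
      ((1/2) * (Real.sqrt ((L + μ)^2 + L₂^2/ρ^2) - L₂/ρ - (L - μ))) := by
  have hP : 0 < (L + μ)/2 := by linarith
  have hq : 0 ≤ L₂/ρ := by positivity
  set s := √((L + μ)^2 + L₂^2/ρ^2)
  have hs2 : s^2 = (L + μ)^2 + L₂^2/ρ^2 := sq_sqrt (by positivity)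
  set F := (s - L₂/ρ)/2 with hF_def
  have hPF : ((L + μ)/2)^2 = F*(F + L₂/ρ) := by
    rw [hF_def]
    linear_combination -hs2/4
  have hF : 0 < F := by
    have : L₂/ρ < s := (lt_sqrt hq).2 (by rw [div_pow]; nlinarith)
    linarith
  refine ⟨fun α β hα hβ h ↦ Feasible.isGreatest_sSup_innerValues h hρ hP.le hα hβ hL₂, ?_⟩
  have hleast := isLeast_sSup_innerValues (C := (L - μ)/2) hρ hP hL₂ hF hPF
  rwa [show F - (L - μ)/2 = (1/2)*(s - L₂/ρ - (L - μ)) by ring] at hleast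

/-- Lemma: the min–max optimization value. -/
theorem minmax_value
    (ρ L μ L₂ : ℝ) (hρ : 1 ≤ ρ) (hμ0 : 0 ≤ μ) (hμL : μ ≤ L) (hL : 0 < L) (hL₂ : 0 ≤ L₂) :
    (∀ α β : ℝ, 0 ≤ α → 0 ≤ β → α^2 + ρ^2 * β^2 ≤ 1 + (max (β - α) 0)^2 →
      IsGreatest {v : ℝ | ∃ t₁ t₂ : ℝ, t₂ ≤ t₁ ∧ 0 ≤ t₂ ∧ (1 - α^2)*t₁^2 + α^2*t₂^2 = 1 ∧
          v = (L + μ)/2 * ((1 - α^2)*t₁ + α^2*t₂) - (L - μ)/2 - t₂*L₂*α*β}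
        (sSup {v : ℝ | ∃ t₁ t₂ : ℝ, t₂ ≤ t₁ ∧ 0 ≤ t₂ ∧ (1 - α^2)*t₁^2 + α^2*t₂^2 = 1 ∧
          v = (L + μ)/2 * ((1 - α^2)*t₁ + α^2*t₂) - (L - μ)/2 - t₂*L₂*α*β})) ∧
    IsLeast {w : ℝ | ∃ α β : ℝ, 0 ≤ α ∧ 0 ≤ β ∧ α^2 + ρ^2*β^2 ≤ 1 + (max (β - α) 0)^2 ∧
        w = sSup {v : ℝ | ∃ t₁ t₂ : ℝ, t₂ ≤ t₁ ∧ 0 ≤ t₂ ∧ (1 - α^2)*t₁^2 + α^2*t₂^2 = 1 ∧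
          v = (L + μ)/2 * ((1 - α^2)*t₁ + α^2*t₂) - (L - μ)/2 - t₂*L₂*α*β}}
      ((1/2) * (Real.sqrt ((L + μ)^2 + L₂^2/ρ^2) - L₂/ρ - (L - μ))) :=
  minmax_value_general ρ L μ L₂ hρ hμ0 hL hL₂

end
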